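/- If λ > Λ(A,B), then ψ_λ'(t) > 0 for every t > 0; in particular ψ_λ is strictly increasing on (0,∞) and has no critical point there. -/

import Mathlib

open Real Set Filter

/-- Fiber map `ψ_λ(t) = (a/2)·A·t² + (λ/4)·A²·t⁴ − (1/γ)·B·t^γ`. -/
noncomputable def psi (a γ A B lam t : ℝ) : ℝ :=
  a / 2 * A * t ^ 2 + lam / 4 * A ^ 2 * t ^ 4 - 1 / γ * B * t ^ γ

/-- The constant `C_{a,γ} = a·((γ−2)/(4−γ))·((4−γ)/(2a))^(2/(γ−2))`. -/
noncomputable def Cag (a γ : ℝ) : ℝ :=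
  a * ((γ - 2) / (4 - γ)) * ((4 - γ) / (2 * a)) ^ (2 / (γ - 2))

/-- The extremal value `Λ(A,B) = C_{a,γ}·B^(2/(γ−2))·A^(−γ/(γ−2))`. -/
noncomputable def Lam (a γ A B : ℝ) : ℝ :=
  Cag a γ * B ^ (2 / (γ - 2)) * A ^ (-(γ / (γ - 2)))

/-- `T(A,B) = (2aA/((4−γ)B))^(1/(γ−2))`. -/
noncomputable def Tab (a γ A B : ℝ) : ℝ :=
  (2 * a * A / ((4 - γ) * B)) ^ (1 / (γ - 2))

/-! Since ψ_λ'(t) = t·(aA + λA²t² − B·t^(γ−2)), it suffices that B·t^(γ−2) ≤ ΛA²t² + aA.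
Substituting t = T·s with T = `Tab a γ A B`, the identities B·T^(γ−2) = 2aA/(4−γ) and
ΛA²T² = (γ−2)aA/(4−γ) turn this into Bernoulli's inequality (s²)^θ ≤ 1 + θ(s² − 1) for
θ = (γ−2)/2 ∈ (0,1). Equality at s = 1 is what makes Λ the threshold. -/

theorem hasDerivAt_psi (a γ A B lam : ℝ) {t : ℝ} (ht : 0 < t) (hγ : γ ≠ 0) :
    HasDerivAt (psi a γ A B lam)
      (t * (a * A + lam * A ^ 2 * t ^ 2 - B * t ^ (γ - 2))) t := by
  have h : HasDerivAt (psi a γ A B lam) _ t :=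
    (((hasDerivAt_pow 2 t).const_mul (a / 2 * A)).add
      ((hasDerivAt_pow 4 t).const_mul (lam / 4 * A ^ 2))).sub
      ((hasDerivAt_rpow_const (p := γ) (Or.inl ht.ne')).const_mul (1 / γ * B))
  convert h using 1
  rw [show γ - 1 = γ - 2 + 1 by ring, rpow_add ht, rpow_one]
  field_simp
  ring

section Extremal

variable {a γ A B : ℝ} (ha : 0 < a) (hγ2 : 2 < γ) (hγ4 : γ < 4) (hA : 0 < A) (hB : 0 < B)
include ha hγ2 hγ4 hA hB

theorem Tab_rpow_sub_two : Tab a γ A B ^ (γ - 2) = 2 * a * A / ((4 - γ) * B) := by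
  have : 0 < 4 - γ := by linarith
  rw [Tab, ← rpow_mul (by positivity), one_div_mul_cancel (by linarith), rpow_one]

theorem Lam_mul_sq_mul_Tab_sq :
    Lam a γ A B * A ^ 2 * Tab a γ A B ^ 2 = (γ - 2) / (4 - γ) * a * A := by
  have h4 : 0 < 4 - γ := by linarith
  have h2 : 0 < γ - 2 := by linarith
  set e := 2 / (γ - 2) with he
  have hT : Tab a γ A B ^ 2 = (2 * a / (4 - γ)) ^ e * A ^ e / B ^ e := by
    rw [Tab, ← rpow_natCast, ← rpow_mul (by positivity), ← mul_rpow (by positivity) hA.le,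
      ← div_rpow (by positivity) hB.le]
    congr 1
    · field_simp
    · push_cast; ring
  have hc : ((4 - γ) / (2 * a)) ^ e * (2 * a / (4 - γ)) ^ e = 1 := by
    rw [← mul_rpow (by positivity) (by positivity),
      show (4 - γ) / (2 * a) * (2 * a / (4 - γ)) = 1 by field_simp, one_rpow]
  have hAe : A ^ (-(γ / (γ - 2))) * A ^ 2 * A ^ e = A := by
    rw [← rpow_natCast, ← rpow_add hA, ← rpow_add hA]
    conv_rhs => rw [← rpow_one A]
    congr 1
    rw [he]
    field_simp
    ring
  have hBe : B ^ e ≠ 0 := by positivity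
  calc _ = a * ((γ - 2) / (4 - γ)) * (((4 - γ) / (2 * a)) ^ e * (2 * a / (4 - γ)) ^ e) *
        (B ^ e / B ^ e) * (A ^ (-(γ / (γ - 2))) * A ^ 2 * A ^ e) := by
          rw [hT, Lam, Cag]; ring
    _ = _ := by rw [hc, hAe, div_self hBe]; ring

theorem rpow_sub_two_le_Lam {t : ℝ} (ht : 0 < t) :
    B * t ^ (γ - 2) ≤ Lam a γ A B * A ^ 2 * t ^ 2 + a * A := by
  have h4 : 0 < 4 - γ := by linarith
  have hT : 0 < Tab a γ A B := rpow_pos_of_pos (div_pos (by positivity) (mul_pos h4 hB)) _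
  obtain ⟨s, hs, rfl⟩ : ∃ s, 0 < s ∧ t = Tab a γ A B * s :=
    ⟨t / Tab a γ A B, by positivity, by field_simp⟩
  have hbern : (s ^ 2) ^ ((γ - 2) / 2) ≤ 1 + (γ - 2) / 2 * (s ^ 2 - 1) := by
    have := rpow_one_add_le_one_add_mul_self (s := s ^ 2 - 1) (by nlinarith)
      (p := (γ - 2) / 2) (by linarith) (by linarith)
    rwa [add_sub_cancel] at this
  have hpow : (Tab a γ A B * s) ^ (γ - 2) = Tab a γ A B ^ (γ - 2) * (s ^ 2) ^ ((γ - 2) / 2) := by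
    rw [mul_rpow hT.le hs.le, ← rpow_natCast, ← rpow_mul hs.le]
    congr 2
    push_cast
    ring
  calc B * (Tab a γ A B * s) ^ (γ - 2) = 2 * a * A / (4 - γ) * (s ^ 2) ^ ((γ - 2) / 2) := by
        rw [hpow, Tab_rpow_sub_two ha hγ2 hγ4 hA hB]; field_simp
    _ ≤ 2 * a * A / (4 - γ) * (1 + (γ - 2) / 2 * (s ^ 2 - 1)) := by gcongr
    _ = (γ - 2) / (4 - γ) * a * A * s ^ 2 + a * A := by field_simp; ring
    _ = Lam a γ A B * A ^ 2 * (Tab a γ A B * s) ^ 2 + a * A := by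
        rw [← Lam_mul_sq_mul_Tab_sq ha hγ2 hγ4 hA hB]; ring

end Extremal

theorem stmt_3_general (a γ A B lam : ℝ) (ha : 0 < a) (hγ2 : 2 < γ) (hγ4 : γ < 4)
    (hA : 0 < A) (hB : 0 < B) (hgt : Lam a γ A B < lam) :
    (∀ t : ℝ, 0 < t → 0 < deriv (psi a γ A B lam) t) ∧
    StrictMonoOn (psi a γ A B lam) (Set.Ioi 0) ∧
    ∀ t : ℝ, 0 < t → deriv (psi a γ A B lam) t ≠ 0 := by
  have hderiv (t : ℝ) (ht : 0 < t) := hasDerivAt_psi a γ A B lam ht (by linarith : γ ≠ 0)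
  have hpos (t : ℝ) (ht : 0 < t) : 0 < deriv (psi a γ A B lam) t := by
    have hkey := rpow_sub_two_le_Lam ha hγ2 hγ4 hA hB ht
    have hlam : Lam a γ A B * A ^ 2 * t ^ 2 < lam * A ^ 2 * t ^ 2 := by gcongr
    rw [(hderiv t ht).deriv]
    exact mul_pos ht (by linarith)
  refine ⟨hpos, ?_, fun t ht => (hpos t ht).ne'⟩
  refine strictMonoOn_of_deriv_pos (convex_Ioi 0)
    (fun t ht => (hderiv t ht).continuousAt.continuousWithinAt) fun t ht => ?_
  rw [interior_Ioi] at ht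
  exact hpos t ht

/-- for `λ > Λ(A,B)` one has `ψ_λ'(t) > 0` for all `t > 0`; in particular
`ψ_λ` is strictly increasing on `(0,∞)` and has no critical point there. -/
theorem stmt_3 (a γ A B lam : ℝ) (ha : 0 < a) (hγ2 : 2 < γ) (hγ4 : γ < 4)
    (hA : 0 < A) (hB : 0 < B) (hlam : 0 < lam) (hgt : Lam a γ A B < lam) :
    (∀ t : ℝ, 0 < t → 0 < deriv (psi a γ A B lam) t) ∧
    StrictMonoOn (psi a γ A B lam) (Set.Ioi 0) ∧
    ∀ t : ℝ, 0 < t → deriv (psi a γ A B lam) t ≠ 0 :=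
  stmt_3_general a γ A B lam ha hγ2 hγ4 hA hB hgt
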